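/- arXiv:1601.04987 — 4 statements merged into one kernel-verified Lean document; each statement's English description precedes it below -/
import Mathlib

section
/- For an SFT with irreducible matrix, the lower topological pressure satisfies P(t) = log(ρ(A S^{(t)})) for every t > 0; in particular the unique zero h of P is the unique value with ρ(A S^{(h)}) = 1. -/
open Filter Finset

/-- Allowable words of length `n` of the SFT on `Fin m` with forbidden words `F` of length `k`. -/
noncomputable def allowWords (m k : ℕ) (F : Finset (Fin k → Fin m)) (n : ℕ) :
    Finset (Fin n → Fin m) :=
  open scoped Classical in
  Finset.univ.filter (fun ω => ∀ (j : ℕ) (hj : j + k ≤ n),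
    (fun i : Fin k => ω ⟨j + i.1, by omega⟩) ∉ F)

/-!
With `B = A S^{(t)}`, the matrix `S₀^{(t)}` is diagonal with positive entries and `B` is
entrywise nonnegative, so the entry sum of `S₀^{(t)} Bⁿ` is comparable, up to constants
independent of `n`, to the entry sum of `Bⁿ` and hence to the `ℓ^∞` operator norm of `Bⁿ`.
Gelfand's formula `‖Bⁿ‖^{1/n} → ρ(B)` then shows that the partition sums over words of length
`n + k - 1` grow like `ρ(B)ⁿ`, and a shift of the length by `k - 1` does not change the
exponential growth rate.
-/

open scoped Topology

lemma tendsto_log_div_natCast_of_le_of_le {u v : ℕ → ℝ} {K L ℓ : ℝ} (hK : 0 < K)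
    (hv : ∀ᶠ n in atTop, 0 < v n) (hlow : ∀ᶠ n in atTop, K * v n ≤ u n)
    (hup : ∀ᶠ n in atTop, u n ≤ L * v n)
    (h : Tendsto (fun n => Real.log (v n) / n) atTop (𝓝 ℓ)) :
    Tendsto (fun n => Real.log (u n) / n) atTop (𝓝 ℓ) := by
  have hconst_add : ∀ C : ℝ,
      Tendsto (fun n : ℕ => (Real.log C + Real.log (v n)) / n) atTop (𝓝 ℓ) := fun C => by
    simpa [add_div] using (tendsto_const_div_atTop_nhds_zero_nat (Real.log C)).add h
  refine tendsto_of_tendsto_of_tendsto_of_le_of_le' (hconst_add K) (hconst_add L) ?_ ?_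
  · filter_upwards [hv, hlow] with n hvn hlown
    rw [← Real.log_mul hK.ne' hvn.ne']
    gcongr
  · filter_upwards [hv, hlow, hup] with n hvn hlown hupn
    have hL : 0 < L := pos_of_mul_pos_left ((mul_pos hK hvn).trans_le (hlown.trans hupn)) hvn.le
    rw [← Real.log_mul hL.ne' hvn.ne']
    gcongr
    exact (mul_pos hK hvn).trans_le hlown

lemma tendsto_comp_add_div_natCast {x : ℕ → ℝ} {ℓ : ℝ} (j : ℕ)
    (h : Tendsto (fun n => x n / n) atTop (𝓝 ℓ)) :
    Tendsto (fun n => x (n + j) / n) atTop (𝓝 ℓ) := by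
  have hratio : Tendsto (fun n : ℕ => ((n + j : ℕ) : ℝ) / n) atTop (𝓝 1) := by
    simpa using (tendsto_natCast_div_add_atTop (j : ℝ)).inv₀ one_ne_zero
  have hprod := hratio.mul ((tendsto_add_atTop_iff_nat j).2 h)
  rw [one_mul] at hprod
  refine hprod.congr' ?_
  filter_upwards [eventually_gt_atTop 0] with n hn
  have hn' : (n : ℝ) ≠ 0 := by positivity
  have hnj : ((n + j : ℕ) : ℝ) ≠ 0 := by positivity
  field_simp

lemma spectralRadius_eq_ofReal_of_isGreatest {𝕜 A : Type*} [NormedField 𝕜] [Ring A]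
    [Algebra 𝕜 A] {a : A} {r : ℝ}
    (h : IsGreatest {x : ℝ | ∃ μ : 𝕜, μ ∈ spectrum 𝕜 a ∧ x = ‖μ‖} r) :
    spectralRadius 𝕜 a = ENNReal.ofReal r := by
  obtain ⟨⟨μ, hμ, rfl⟩, hmax⟩ := h
  refine le_antisymm (iSup₂_le fun ν hν => ?_) ?_
  · rw [← enorm_eq_nnnorm, ← ofReal_norm]
    exact ENNReal.ofReal_le_ofReal (hmax ⟨ν, hν, rfl⟩)
  · rw [ofReal_norm, enorm_eq_nnnorm]
    exact le_iSup₂ (f := fun ν (_ : ν ∈ spectrum 𝕜 a) => (‖ν‖₊ : ENNReal)) μ hμ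

lemma norm_pow_pos_of_mem_spectrum {𝕜 A : Type*} [NormedField 𝕜] [NormedRing A]
    [NormedAlgebra 𝕜 A] [CompleteSpace A] {a : A} {μ : 𝕜} (hμ : μ ∈ spectrum 𝕜 a) (hμ0 : μ ≠ 0)
    (n : ℕ) : 0 < ‖a ^ n‖ := by
  have hle := Metric.mem_closedBall.1 <|
    spectrum.subset_closedBall_norm_mul (a ^ n) (spectrum.pow_image_subset a n ⟨μ, hμ, rfl⟩)
  rw [dist_zero_right, norm_pow] at hle
  exact pos_of_mul_pos_left ((pow_pos (norm_pos_iff.2 hμ0) n).trans_le hle) (norm_nonneg _)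

lemma tendsto_log_norm_pow_div_of_spectralRadius_eq {A : Type*} [NormedRing A]
    [NormedAlgebra ℂ A] [CompleteSpace A] {a : A} {r : ℝ} (hr : 0 < r)
    (hnorm : ∀ n : ℕ, 0 < ‖a ^ n‖) (h : spectralRadius ℂ a = ENNReal.ofReal r) :
    Tendsto (fun n : ℕ => Real.log ‖a ^ n‖ / n) atTop (𝓝 (Real.log r)) := by
  have hgelfand := spectrum.pow_norm_pow_one_div_tendsto_nhds_spectralRadius a
  rw [h] at hgelfand
  have hroot : Tendsto (fun n : ℕ => ‖a ^ n‖ ^ (1 / n : ℝ)) atTop (𝓝 r) := by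
    have := (ENNReal.tendsto_toReal ENNReal.ofReal_ne_top).comp hgelfand
    rw [ENNReal.toReal_ofReal hr.le] at this
    refine this.congr fun n => ?_
    exact ENNReal.toReal_ofReal (by positivity)
  refine ((Real.continuousAt_log hr.ne').tendsto.comp hroot).congr fun n => ?_
  rw [Function.comp_apply, Real.log_rpow (hnorm n), one_div_mul_eq_div]

lemma Finite.exists_pos_forall_le {ι : Type*} [Finite ι] {d : ι → ℝ} (hd : ∀ i, 0 < d i) :
    ∃ K > 0, ∀ i, K ≤ d i := by
  cases isEmpty_or_nonempty ι
  · exact ⟨1, one_pos, isEmptyElim⟩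
  · obtain ⟨i₀, hi₀⟩ := Finite.exists_min d
    exact ⟨d i₀, hd i₀, hi₀⟩

namespace Matrix

variable {ι : Type*} [Fintype ι]

section LinftyOpNorm

variable {κ α : Type*} [Fintype κ] [SeminormedAddCommGroup α]

attribute [local instance] Matrix.linftyOpSeminormedAddCommGroup

lemma linfty_opNorm_le_sum_norm (M : Matrix ι κ α) : ‖M‖ ≤ ∑ i, ∑ j, ‖M i j‖ := by
  have hle : ‖M‖₊ ≤ ∑ i, ∑ j, ‖M i j‖₊ := by
    rw [linfty_opNNNorm_def]
    exact Finset.sup_le fun i _ =>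
      single_le_sum (f := fun i => ∑ j, ‖M i j‖₊) (fun _ _ => zero_le) (mem_univ i)
  simpa using NNReal.coe_le_coe.2 hle

lemma sum_norm_le_linfty_opNorm (M : Matrix ι κ α) (i : ι) : ∑ j, ‖M i j‖ ≤ ‖M‖ := by
  have hle : ∑ j, ‖M i j‖₊ ≤ ‖M‖₊ := by
    rw [linfty_opNNNorm_def]
    exact Finset.le_sup (f := fun i => ∑ j, ‖M i j‖₊) (mem_univ i)
  simpa using NNReal.coe_le_coe.2 hle

end LinftyOpNorm

variable [DecidableEq ι]

lemma sum_sum_diagonal_mul_apply (d : ι → ℝ) (M : Matrix ι ι ℝ) :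
    ∑ i, ∑ j, (diagonal d * M) i j = ∑ i, d i * ∑ j, M i j := by
  simp only [diagonal_mul, mul_sum]

lemma map_ofReal_pow (B : Matrix ι ι ℝ) (n : ℕ) :
    B.map (Complex.ofReal ·) ^ n = (B ^ n).map (Complex.ofReal ·) :=
  (map_pow Complex.ofRealHom.mapMatrix B n).symm

attribute [local instance] Matrix.linftyOpNormedRing Matrix.linftyOpNormedAlgebra in
theorem tendsto_log_sum_diagonal_mul_pow_div {B : Matrix ι ι ℝ} (hB : ∀ i j, 0 ≤ B i j)
    {d : ι → ℝ} (hd : ∀ i, 0 < d i) {r : ℝ}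
    (hr : IsGreatest {x : ℝ | ∃ μ : ℂ, μ ∈ spectrum ℂ (B.map (Complex.ofReal ·)) ∧ x = ‖μ‖} r)
    (hr0 : 0 < r) :
    Tendsto (fun n : ℕ => Real.log (∑ i, ∑ j, (diagonal d * B ^ n) i j) / n) atTop
      (𝓝 (Real.log r)) := by
  have : CompleteSpace (Matrix ι ι ℂ) := FiniteDimensional.complete ℂ _
  set a : Matrix ι ι ℂ := B.map (Complex.ofReal ·)
  obtain ⟨μ, hμ, rfl⟩ := hr.1
  have hnorm : ∀ n, 0 < ‖a ^ n‖ := norm_pow_pos_of_mem_spectrum hμ (norm_pos_iff.1 hr0)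
  set row : ℕ → ι → ℝ := fun n i => ∑ j, (B ^ n) i j
  have hrow_nonneg : ∀ n i, 0 ≤ row n i := fun n i =>
    sum_nonneg fun j _ => pow_apply_nonneg hB n i j
  have hrow : ∀ n i, ∑ j, ‖(a ^ n) i j‖ = row n i := fun n i =>
    sum_congr rfl fun j _ => by
      rw [map_ofReal_pow, map_apply, Complex.norm_of_nonneg (pow_apply_nonneg hB n i j)]
  obtain ⟨K, hK, hKd⟩ := Finite.exists_pos_forall_le hd
  refine tendsto_log_div_natCast_of_le_of_le (L := Fintype.card ι * ∑ i, d i) hK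
    (.of_forall hnorm) (.of_forall fun n => ?_) (.of_forall fun n => ?_)
    (tendsto_log_norm_pow_div_of_spectralRadius_eq hr0 hnorm
      (spectralRadius_eq_ofReal_of_isGreatest hr))
  · calc K * ‖a ^ n‖ ≤ K * ∑ i, row n i := by
          gcongr
          simpa only [hrow] using linfty_opNorm_le_sum_norm (a ^ n)
      _ = ∑ i, K * row n i := mul_sum _ _ _
      _ ≤ ∑ i, d i * row n i := by gcongr with i; exacts [hrow_nonneg n i, hKd i]
      _ = ∑ i, ∑ j, (diagonal d * B ^ n) i j := (sum_sum_diagonal_mul_apply d _).symm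
  · calc ∑ i, ∑ j, (diagonal d * B ^ n) i j = ∑ i, d i * row n i := sum_sum_diagonal_mul_apply d _
      _ ≤ ∑ _i : ι, (∑ i, d i) * ‖a ^ n‖ := by
          refine sum_le_sum fun i _ => mul_le_mul ?_ ?_ (hrow_nonneg n i) ?_
          · exact single_le_sum (fun i _ => (hd i).le) (mem_univ i)
          · simpa only [hrow] using sum_norm_le_linfty_opNorm (a ^ n) i
          · exact sum_nonneg fun i _ => (hd i).le
      _ = (Fintype.card ι * ∑ i, d i) * ‖a ^ n‖ := by
          rw [sum_const, card_univ, nsmul_eq_mul, mul_assoc]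

end Matrix

/-- For an SFT with irreducible adjacency matrix `A`, the lower topological
pressure satisfies `P t = log ρ(A S^{(t)})` for every `t > 0`; in particular, for `h > 0`,
`P h = 0` if and only if `ρ(A S^{(h)}) = 1`. -/
theorem pressure_eq_log_spectral_radius
    (m k : ℕ) (hk : 2 ≤ k)
    (c : Fin m → ℝ) (hc : ∀ i, 0 < c i ∧ c i < 1)
    (F : Finset (Fin k → Fin m))
    (A : Matrix (Fin (k - 1) → Fin m) (Fin (k - 1) → Fin m) ℝ)
    (hA01 : ∀ τ ξ, A τ ξ = 0 ∨ A τ ξ = 1)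
    (S0t St : ℝ → Matrix (Fin (k - 1) → Fin m) (Fin (k - 1) → Fin m) ℝ)
    (hS0t : ∀ t, S0t t = Matrix.diagonal (fun τ => (∏ i, c (τ i)) ^ t))
    (hSt : ∀ t, St t = Matrix.diagonal (fun ξ => c (ξ ⟨k - 2, by omega⟩) ^ t))
    -- the sum of the entries of `S₀^{(t)} (A S^{(t)})^n` equals the sum of `c_ω^t` over the
    -- allowable words of length `n + k - 1` (Lemma 3.6)
    (hbridge : ∀ (t : ℝ) (n : ℕ), 1 ≤ n →
      ∑ τ, ∑ ξ, (S0t t * (A * St t) ^ n) τ ξ =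
        ∑ ω ∈ allowWords m k F (n + k - 1), (∏ i, c (ω i)) ^ t)
    -- `rho t` is the spectral radius of `A S^{(t)}`
    (rho : ℝ → ℝ)
    (hrho : ∀ t, IsGreatest {x : ℝ | ∃ μ : ℂ,
      μ ∈ spectrum ℂ ((A * St t).map (Complex.ofReal ·)) ∧ x = ‖μ‖} (rho t))
    (hrhopos : ∀ t, 0 < rho t)
    (P : ℝ → ℝ)
    (hP : ∀ t : ℝ, Tendsto
      (fun n : ℕ => (1 / (n : ℝ)) *
        Real.log (∑ ω ∈ allowWords m k F n, (∏ i, c (ω i)) ^ t))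
      atTop (nhds (P t))) :
    (∀ t : ℝ, 0 < t → P t = Real.log (rho t)) ∧
    (∀ h : ℝ, 0 < h → (P h = 0 ↔ rho h = 1)) := by
  have hP_eq : ∀ t, P t = Real.log (rho t) := by
    intro t
    have hB : ∀ τ ξ, 0 ≤ (A * St t) τ ξ := fun τ ξ => by
      rw [hSt, Matrix.mul_diagonal]
      exact mul_nonneg (by rcases hA01 τ ξ with h | h <;> simp [h])
        (Real.rpow_nonneg (hc _).1.le t)
    have hd : ∀ τ : Fin (k - 1) → Fin m, 0 < (∏ i, c (τ i)) ^ t := fun τ =>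
      Real.rpow_pos_of_pos (prod_pos fun i _ => (hc _).1) t
    have hshift := tendsto_comp_add_div_natCast (k - 1)
      (by simpa only [one_div_mul_eq_div] using hP t)
    refine tendsto_nhds_unique hshift
      ((Matrix.tendsto_log_sum_diagonal_mul_pow_div hB hd (hrho t) (hrhopos t)).congr' ?_)
    filter_upwards [eventually_ge_atTop 1] with n hn
    rw [← hS0t, hbridge t n hn, Nat.add_sub_assoc (by omega)]
  refine ⟨fun t _ => hP_eq t, fun h _ => ?_⟩
  rw [hP_eq]
  exact ⟨Real.eq_one_of_pos_of_log_eq_zero (hrhopos h), fun h1 => by rw [h1, Real.log_one]⟩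
end

section
/- Let h be the unique zero of the lower topological pressure function of an SFT with irreducible matrix. Then there exist positive constants K_0, L_0 such that K_0 ≤ Σ_{ω ∈ W_n} c_ω^h ≤ L_0 for all n ≥ 1. -/
/-!
At `s = h` the growth estimate squeezes the word sums `S_n` between `K λⁿ` and `L λⁿ`, so
`(1/n) log S_n → log λ`. This limit is `P h = 0`, hence `λ = 1` and `K ≤ S_n ≤ L`.
-/

open Filter Finset Topology

lemma tendsto_inv_mul_log_const_mul_pow {C lam : ℝ} (hC : 0 < C) (hlam : 0 < lam) :
    Tendsto (fun n : ℕ => (1 / (n : ℝ)) * Real.log (C * lam ^ n)) atTop (𝓝 (Real.log lam)) := by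
  have hlim : Tendsto (fun n : ℕ => Real.log C / n + Real.log lam) atTop
      (𝓝 (0 + Real.log lam)) :=
    (tendsto_const_nhds.div_atTop tendsto_natCast_atTop_atTop).add tendsto_const_nhds
  rw [zero_add] at hlim
  refine hlim.congr' ?_
  filter_upwards [eventually_gt_atTop 0] with n hn
  rw [Real.log_mul hC.ne' (pow_pos hlam n).ne', Real.log_pow]
  field_simp

lemma tendsto_inv_mul_log_of_pow_bounds {a : ℕ → ℝ} {K L lam : ℝ} (hK : 0 < K) (hL : 0 < L)
    (hlam : 0 < lam) (hbd : ∀ᶠ n in atTop, K * lam ^ n ≤ a n ∧ a n ≤ L * lam ^ n) :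
    Tendsto (fun n : ℕ => (1 / (n : ℝ)) * Real.log (a n)) atTop (𝓝 (Real.log lam)) := by
  refine tendsto_of_tendsto_of_tendsto_of_le_of_le'
    (tendsto_inv_mul_log_const_mul_pow hK hlam) (tendsto_inv_mul_log_const_mul_pow hL hlam)
    ?_ ?_ <;> filter_upwards [hbd] with n ⟨hlow, hup⟩ <;> gcongr
  exact (mul_pos hK (pow_pos hlam n)).trans_le hlow

lemma eq_one_of_pow_bounds_of_tendsto_inv_mul_log_zero {a : ℕ → ℝ} {K L lam : ℝ} (hK : 0 < K)
    (hL : 0 < L) (hlam : 0 < lam) (hbd : ∀ᶠ n in atTop, K * lam ^ n ≤ a n ∧ a n ≤ L * lam ^ n)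
    (hzero : Tendsto (fun n : ℕ => (1 / (n : ℝ)) * Real.log (a n)) atTop (𝓝 0)) :
    lam = 1 :=
  Real.eq_one_of_pos_of_log_eq_zero hlam
    (tendsto_nhds_unique (tendsto_inv_mul_log_of_pow_bounds hK hL hlam hbd) hzero)

theorem word_sum_at_zero_bounded_general
    (m : ℕ) (c : Fin m → ℝ)
    (W : ∀ n : ℕ, Finset (Fin n → Fin m))
    (P : ℝ → ℝ)
    (hP : ∀ t : ℝ, Tendsto
      (fun n : ℕ => (1 / (n : ℝ)) * Real.log (∑ ω ∈ W n, (∏ i, c (ω i)) ^ t))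
      atTop (nhds (P t)))
    -- the two-sided matrix growth estimate coming from the irreducible adjacency matrix
    (hgrow : ∀ s : ℝ, ∃ lam K L : ℝ, 0 < lam ∧ 0 < K ∧ 0 < L ∧ ∀ n : ℕ, 1 ≤ n →
      K * lam ^ n ≤ ∑ ω ∈ W n, (∏ i, c (ω i)) ^ s ∧
      ∑ ω ∈ W n, (∏ i, c (ω i)) ^ s ≤ L * lam ^ n)
    (h : ℝ) (hzero : P h = 0) :
    ∃ K0 L0 : ℝ, 0 < K0 ∧ 0 < L0 ∧ ∀ n : ℕ, 1 ≤ n →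
      K0 ≤ ∑ ω ∈ W n, (∏ i, c (ω i)) ^ h ∧ ∑ ω ∈ W n, (∏ i, c (ω i)) ^ h ≤ L0 := by
  obtain ⟨lam, K, L, hlam, hK, hL, hKL⟩ := hgrow h
  have hlam_one : lam = 1 :=
    eq_one_of_pow_bounds_of_tendsto_inv_mul_log_zero hK hL hlam (eventually_atTop.2 ⟨1, hKL⟩)
      (hzero ▸ hP h)
  subst hlam_one
  exact ⟨K, L, hK, hL, fun n hn => by simpa only [one_pow, mul_one] using hKL n hn⟩

/-- If `h` is the unique zero of the lower topological pressure function of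
an SFT with irreducible matrix, then there are positive constants `K₀, L₀` with
`K₀ ≤ ∑_{ω ∈ W_n} c_ω^h ≤ L₀` for all `n ≥ 1`. -/
theorem word_sum_at_zero_bounded
    (m : ℕ) (hm : 0 < m) (c : Fin m → ℝ) (hc : ∀ i, 0 < c i ∧ c i < 1)
    (W : ∀ n : ℕ, Finset (Fin n → Fin m))
    (hWne : ∀ n, (W n).Nonempty)
    (P : ℝ → ℝ)
    (hP : ∀ t : ℝ, Tendsto
      (fun n : ℕ => (1 / (n : ℝ)) * Real.log (∑ ω ∈ W n, (∏ i, c (ω i)) ^ t))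
      atTop (nhds (P t)))
    (hanti : StrictAnti P)
    -- submultiplicativity of the word sums
    (hsub : ∀ (s : ℝ) (n p : ℕ), 1 ≤ n → 1 ≤ p →
      ∑ ω ∈ W (n * p), (∏ i, c (ω i)) ^ s ≤ (∑ ω ∈ W n, (∏ i, c (ω i)) ^ s) ^ p)
    -- the two-sided matrix growth estimate coming from the irreducible adjacency matrix
    (hgrow : ∀ s : ℝ, ∃ lam K L : ℝ, 0 < lam ∧ 0 < K ∧ 0 < L ∧ ∀ n : ℕ, 1 ≤ n →
      K * lam ^ n ≤ ∑ ω ∈ W n, (∏ i, c (ω i)) ^ s ∧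
      ∑ ω ∈ W n, (∏ i, c (ω i)) ^ s ≤ L * lam ^ n)
    (h : ℝ) (hh : 0 ≤ h) (hzero : P h = 0) :
    ∃ K0 L0 : ℝ, 0 < K0 ∧ 0 < L0 ∧ ∀ n : ℕ, 1 ≤ n →
      K0 ≤ ∑ ω ∈ W n, (∏ i, c (ω i)) ^ h ∧ ∑ ω ∈ W n, (∏ i, c (ω i)) ^ h ≤ L0 :=
  word_sum_at_zero_bounded_general m c W P hP hgrow h hzero
end

section
/- For the subfractal F_{X_A} of an HIFS satisfying the OSC, induced by an SFT with irreducible matrix A: dim_H(F_{X_A}) ≤ H, where H is the unique zero of the upper topological pressure function P̄. -/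
open Filter Finset MeasureTheory

/-- `applyWord f ω x = f_{ω_n} ∘ ⋯ ∘ f_{ω_1} (x)`. -/
def applyWord {X : Type*} {m : ℕ} (f : Fin m → X → X) {l : ℕ}
    (ω : Fin l → Fin m) (x : X) : X :=
  (List.ofFn ω).foldl (fun y a => f a y) x

/-!
The images `f_ω(K)` of the words `ω ∈ W_n` cover the subfractal, and `f_ω` is Lipschitz on `K`
with constant `c̄_ω = ∏ c̄_{ω_i} ≤ q^n` for `q := max c̄_i < 1`. So these covers have mesh
tending to `0`, and `∑_{ω ∈ W_n} |f_ω(K)|^H ≤ |K|^H ∑_{ω ∈ W_n} c̄_ω^H ≤ L₁ |K|^H`. Hence the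
`H`-dimensional Hausdorff measure of the subfractal is finite and its dimension is at most `H`.
-/

open scoped NNReal ENNReal Topology

theorem LipschitzOnWith.ediam_image_le {X Y : Type*} [PseudoEMetricSpace X]
    [PseudoEMetricSpace Y] {K : ℝ≥0} {g : X → Y} {s : Set X} (hg : LipschitzOnWith K g s) :
    Metric.ediam (g '' s) ≤ K * Metric.ediam s := by
  apply Metric.ediam_le
  rintro _ ⟨x, hx, rfl⟩ _ ⟨y, hy, rfl⟩
  exact hg.edist_le_mul_of_le hx hy (Metric.edist_le_ediam_of_mem hx hy)

theorem exists_lt_one_forall_le {ι : Type*} [Fintype ι] {r : ι → ℝ≥0} (hr : ∀ i, r i < 1) :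
    ∃ q < 1, ∀ i, r i ≤ q :=
  ⟨univ.sup r, (Finset.sup_lt_iff zero_lt_one).2 fun i _ => hr i, fun _ => le_sup (mem_univ _)⟩

section applyWord

variable {X : Type*} {m : ℕ} {f : Fin m → X → X}

theorem applyWord_zero (ω : Fin 0 → Fin m) : applyWord f ω = id :=
  rfl

theorem applyWord_succ {l : ℕ} (ω : Fin (l + 1) → Fin m) :
    applyWord f ω = applyWord f (fun i => ω i.succ) ∘ f (ω 0) := by
  funext x
  simp [applyWord, List.ofFn_succ]

theorem LipschitzOnWith.applyWord [PseudoEMetricSpace X] {K : Set X} {r : Fin m → ℝ≥0}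
    (hK : ∀ i, Set.MapsTo (f i) K K) (hf : ∀ i, LipschitzOnWith (r i) (f i) K) {l : ℕ}
    (ω : Fin l → Fin m) : LipschitzOnWith (∏ i, r (ω i)) (applyWord f ω) K := by
  induction l with
  | zero => simpa [applyWord_zero] using LipschitzWith.id.lipschitzOnWith
  | succ l ih =>
    rw [applyWord_succ, Fin.prod_univ_succ, mul_comm]
    exact (ih _).comp (hf _) (hK _)

theorem ediam_applyWord_image_le_pow [PseudoEMetricSpace X] {K : Set X} {r : Fin m → ℝ≥0}
    (hK : ∀ i, Set.MapsTo (f i) K K) (hf : ∀ i, LipschitzOnWith (r i) (f i) K) {q : ℝ≥0}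
    (hq : ∀ i, r i ≤ q) {l : ℕ} (ω : Fin l → Fin m) :
    Metric.ediam (applyWord f ω '' K) ≤ (q : ℝ≥0∞) ^ l * Metric.ediam K := by
  refine (LipschitzOnWith.applyWord hK hf ω).ediam_image_le.trans ?_
  gcongr
  simpa using ENNReal.coe_le_coe.2 (prod_le_pow_card univ _ q fun i _ => hq (ω i))

theorem sum_ediam_applyWord_image_rpow_le [PseudoEMetricSpace X] {K : Set X}
    {r : Fin m → ℝ≥0} (hK : ∀ i, Set.MapsTo (f i) K K) (hf : ∀ i, LipschitzOnWith (r i) (f i) K)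
    {l : ℕ} (W : Finset (Fin l → Fin m)) {d : ℝ} (hd : 0 ≤ d) :
    ∑ ω ∈ W, Metric.ediam (applyWord f ω '' K) ^ d ≤
      (∑ ω ∈ W, ((∏ i, r (ω i) : ℝ≥0) : ℝ≥0∞) ^ d) * Metric.ediam K ^ d := by
  rw [sum_mul]
  gcongr with ω
  rw [← ENNReal.mul_rpow_of_nonneg _ _ hd]
  gcongr
  exact (LipschitzOnWith.applyWord hK hf ω).ediam_image_le

end applyWord

theorem dimH_le_of_sum_ediam_rpow_le {X : Type*} [EMetricSpace X] [MeasurableSpace X]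
    [BorelSpace X] {ι : ℕ → Type*} [∀ n, Fintype (ι n)] {s : Set X} {d : ℝ} (hd : 0 ≤ d)
    (t : ∀ n, ι n → Set X) (r : ℕ → ℝ≥0∞) (hr : Tendsto r atTop (𝓝 0))
    (ht : ∀ᶠ n in atTop, ∀ i, Metric.ediam (t n i) ≤ r n)
    (hst : ∀ᶠ n in atTop, s ⊆ ⋃ i, t n i) {C : ℝ≥0∞} (hC : C ≠ ∞)
    (hsum : ∀ᶠ n in atTop, ∑ i, Metric.ediam (t n i) ^ d ≤ C) :
    dimH s ≤ ENNReal.ofReal d := by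
  have hμ : μH[d] s ≤ C :=
    (Measure.hausdorffMeasure_le_liminf_sum d s r hr t ht hst).trans
      (liminf_le_of_frequently_le' hsum.frequently)
  refine dimH_le_of_hausdorffMeasure_ne_top (d := d.toNNReal) ?_
  rw [Real.coe_toNNReal d hd]
  exact (hμ.trans_lt hC.lt_top).ne

theorem subfractal_dimH_upper_bound_general
    {d : ℕ} (m : ℕ)
    (K : Set (EuclideanSpace ℝ (Fin d))) (hK : IsCompact K)
    (f : Fin m → EuclideanSpace ℝ (Fin d) → EuclideanSpace ℝ (Fin d))
    (hfK : ∀ i, Set.MapsTo (f i) K K)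
    (c cbar : Fin m → ℝ) (hc : ∀ i, 0 < c i ∧ c i ≤ cbar i ∧ cbar i < 1)
    (hlip : ∀ i, ∀ x ∈ K, ∀ y ∈ K,
      c i * dist x y ≤ dist (f i x) (f i y) ∧ dist (f i x) (f i y) ≤ cbar i * dist x y)
    -- the SFT and its subfractal, given by the coding map `π`
    (W : ∀ n : ℕ, Finset (Fin n → Fin m))
    (π : {x : ℕ → Fin m // ∀ n : ℕ, (fun i : Fin n => x i.1) ∈ W n} →
      EuclideanSpace ℝ (Fin d))
    (hπ : ∀ x (l : ℕ), π x ∈ applyWord f (fun i : Fin l => x.1 i.1) '' K)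
    (H : ℝ) (hH0 : 0 ≤ H)
    (L1 : ℝ)
    (hL1 : ∀ n : ℕ, 1 ≤ n → ∑ ω ∈ W n, (∏ i, cbar (ω i)) ^ H ≤ L1) :
    dimH (Set.range π) ≤ ENNReal.ofReal H := by
  set r : Fin m → ℝ≥0 := fun i => ⟨cbar i, ((hc i).1.trans_le (hc i).2.1).le⟩
  have hr_coe : ∀ i, (r i : ℝ) = cbar i := fun _ => rfl
  have hr : ∀ i, LipschitzOnWith (r i) (f i) K := fun i =>
    LipschitzOnWith.of_dist_le_mul fun x hx y hy => (hlip i x hx y hy).2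
  obtain ⟨q, hq, hrq⟩ := exists_lt_one_forall_le (r := r) fun i => (hc i).2.2
  have hKdiam : Metric.ediam K ≠ ∞ := hK.isBounded.ediam_ne_top
  have hsum : ∀ n, 1 ≤ n → ∑ ω ∈ W n, ((∏ i, r (ω i) : ℝ≥0) : ℝ≥0∞) ^ H ≤ ENNReal.ofReal L1 := by
    intro n hn
    calc ∑ ω ∈ W n, ((∏ i, r (ω i) : ℝ≥0) : ℝ≥0∞) ^ H
        = ENNReal.ofReal (∑ ω ∈ W n, ((∏ i, r (ω i) : ℝ≥0) : ℝ) ^ H) := by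
          rw [ENNReal.ofReal_sum_of_nonneg fun ω _ => by positivity]
          refine sum_congr rfl fun ω _ => ?_
          rw [← ENNReal.ofReal_coe_nnreal, ENNReal.ofReal_rpow_of_nonneg (by positivity) hH0]
      _ ≤ ENNReal.ofReal L1 :=
          ENNReal.ofReal_le_ofReal (by simpa only [NNReal.coe_prod, hr_coe] using hL1 n hn)
  refine dimH_le_of_sum_ediam_rpow_le hH0 (fun n (ω : W n) => applyWord f ω.1 '' K)
    (fun n => (q : ℝ≥0∞) ^ n * Metric.ediam K) ?_ (.of_forall fun n ω => ?_)
    (.of_forall fun n => ?_) (C := ENNReal.ofReal L1 * Metric.ediam K ^ H)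
    (ENNReal.mul_ne_top ENNReal.ofReal_ne_top (ENNReal.rpow_ne_top_of_nonneg hH0 hKdiam)) ?_
  · simpa using ENNReal.Tendsto.mul_const
      (ENNReal.tendsto_pow_atTop_nhds_zero_of_lt_one (ENNReal.coe_lt_one_iff.2 hq)) (Or.inr hKdiam)
  · exact ediam_applyWord_image_le_pow hfK hr hrq ω.1
  · rintro _ ⟨x, rfl⟩
    exact Set.mem_iUnion.2 ⟨⟨_, x.2 n⟩, hπ x n⟩
  · filter_upwards [eventually_ge_atTop 1] with n hn
    rw [sum_coe_sort (W n) fun ω => Metric.ediam (applyWord f ω '' K) ^ H]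
    exact (sum_ediam_applyWord_image_rpow_le hfK hr (W n) hH0).trans (by gcongr; exact hsum n hn)

/-- For the subfractal `F_{X_A}` of an HIFS satisfying the OSC, induced by
an SFT with irreducible matrix: `dim_H (F_{X_A}) ≤ H`, where `H` is the unique zero of the
upper topological pressure function `P̄`. -/
theorem subfractal_dimH_upper_bound
    {d : ℕ} (m : ℕ) (hm : 0 < m)
    (K : Set (EuclideanSpace ℝ (Fin d))) (hK : IsCompact K) (hKne : K.Nonempty)
    (f : Fin m → EuclideanSpace ℝ (Fin d) → EuclideanSpace ℝ (Fin d))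
    (hfK : ∀ i, Set.MapsTo (f i) K K)
    (c cbar : Fin m → ℝ) (hc : ∀ i, 0 < c i ∧ c i ≤ cbar i ∧ cbar i < 1)
    (hlip : ∀ i, ∀ x ∈ K, ∀ y ∈ K,
      c i * dist x y ≤ dist (f i x) (f i y) ∧ dist (f i x) (f i y) ≤ cbar i * dist x y)
    -- the open set condition
    (U : Set (EuclideanSpace ℝ (Fin d))) (hUopen : IsOpen U) (hUne : U.Nonempty)
    (hUK : U ⊆ K) (hUinv : ∀ i, f i '' U ⊆ U)
    (hUdisj : ∀ i j, i ≠ j → (f i '' U) ∩ (f j '' U) = ∅)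
    -- the SFT and its subfractal, given by the coding map `π`
    (W : ∀ n : ℕ, Finset (Fin n → Fin m)) (hWne : ∀ n, (W n).Nonempty)
    (π : {x : ℕ → Fin m // ∀ n : ℕ, (fun i : Fin n => x i.1) ∈ W n} →
      EuclideanSpace ℝ (Fin d))
    (hπ : ∀ x (l : ℕ), π x ∈ applyWord f (fun i : Fin l => x.1 i.1) '' K)
    -- the upper topological pressure function and its unique zero `H`
    (Pbar : ℝ → ℝ)
    (hPbar : ∀ t : ℝ, Tendsto
      (fun n : ℕ => (1 / (n : ℝ)) * Real.log (∑ ω ∈ W n, (∏ i, cbar (ω i)) ^ t))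
      atTop (nhds (Pbar t)))
    (H : ℝ) (hH0 : 0 ≤ H) (hHzero : Pbar H = 0)
    (L1 : ℝ) (hL1pos : 0 < L1)
    (hL1 : ∀ n : ℕ, 1 ≤ n → ∑ ω ∈ W n, (∏ i, cbar (ω i)) ^ H ≤ L1) :
    dimH (Set.range π) ≤ ENNReal.ofReal H :=
  subfractal_dimH_upper_bound_general m K hK f hfK c cbar hc hlip W π hπ H hH0 L1 hL1
end

section
/- If a subshift X decomposes as a finite union X = ⋃_{l=1}^p Y_l of subsets, and for each l the corresponding subfractal satisfies h_l ≤ dim_H(F_{Y_l}) ≤ H_l, then max_l h_l ≤ dim_H(F_X) ≤ max_l H_l, where F_X = π(X) and F_{Y_l} = π(Y_l) under the coding map π. In particular, for a sofic subshift with reducible matrix A_G having irreducible components A_1,...,A_k: max_{1≤i≤k} h_i ≤ dim_H(F_{X_{A_G}}) ≤ max_{1≤i≤k} H_i. -/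
open MeasureTheory Set
open scoped ENNReal

section

variable {X : Type*} [EMetricSpace X] {ι : Sort*} [Countable ι] {s : ι → Set X}

theorem iSup_le_dimH_iUnion {a : ι → ℝ≥0∞} (ha : ∀ i, a i ≤ dimH (s i)) :
    (⨆ i, a i) ≤ dimH (⋃ i, s i) :=
  (dimH_iUnion s).symm ▸ iSup_mono ha

theorem dimH_iUnion_le_iSup {b : ι → ℝ≥0∞} (hb : ∀ i, dimH (s i) ≤ b i) :
    dimH (⋃ i, s i) ≤ ⨆ i, b i :=
  (dimH_iUnion s).symm ▸ iSup_mono hb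

end

theorem dimH_of_finite_union_decomposition_general
    {X : Type*} [EMetricSpace X]
    (p : ℕ)
    (FX : Set X) (FY : Fin p → Set X)
    (hdecomp : FX = ⋃ l, FY l)
    (h H : Fin p → ℝ≥0∞)
    (hbounds : ∀ l, h l ≤ dimH (FY l) ∧ dimH (FY l) ≤ H l) :
    ((⨆ l, h l) ≤ dimH FX ∧ dimH FX ≤ ⨆ l, H l) ∧
    ∀ (k : ℕ) (hcomp Hcomp : Fin k → ℝ≥0∞) (ι : Fin p → Fin k),
      Function.Surjective ι →
      (∀ l, h l = hcomp (ι l) ∧ H l = Hcomp (ι l)) →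
      (⨆ i, hcomp i) ≤ dimH FX ∧ dimH FX ≤ ⨆ i, Hcomp i := by
  subst hdecomp
  have bounds : (⨆ l, h l) ≤ dimH (⋃ l, FY l) ∧ dimH (⋃ l, FY l) ≤ ⨆ l, H l :=
    ⟨iSup_le_dimH_iUnion fun l => (hbounds l).1, dimH_iUnion_le_iSup fun l => (hbounds l).2⟩
  refine ⟨bounds, fun k hcomp Hcomp ι hι hcomp_eq => ?_⟩
  obtain ⟨rfl, rfl⟩ : h = hcomp ∘ ι ∧ H = Hcomp ∘ ι :=
    ⟨funext fun l => (hcomp_eq l).1, funext fun l => (hcomp_eq l).2⟩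
  simpa only [Function.comp_apply, hι.iSup_comp] using bounds

/-- If a subshift decomposes as a finite union, i.e. the subfractal
`F_X` is a finite union `F_X = ⋃_l F_{Y_l}` of subfractals with
`h_l ≤ dim_H F_{Y_l} ≤ H_l`, then `max_l h_l ≤ dim_H F_X ≤ max_l H_l`.  In particular, for
a sofic subshift with reducible matrix `A_G` having irreducible components `A_1, …, A_k`,
where the bounds of each piece of the decomposition are the pressure zeros `h_i, H_i` of
its terminal component (each component occurring): `max_i h_i ≤ dim_H F_{X_{A_G}} ≤ max_i H_i`. -/
theorem dimH_of_finite_union_decomposition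
    {X : Type*} [EMetricSpace X]
    (p : ℕ) (hp : 0 < p)
    (FX : Set X) (FY : Fin p → Set X)
    (hdecomp : FX = ⋃ l, FY l)
    (h H : Fin p → ℝ≥0∞)
    (hbounds : ∀ l, h l ≤ dimH (FY l) ∧ dimH (FY l) ≤ H l) :
    ((⨆ l, h l) ≤ dimH FX ∧ dimH FX ≤ ⨆ l, H l) ∧
    ∀ (k : ℕ) (hcomp Hcomp : Fin k → ℝ≥0∞) (ι : Fin p → Fin k),
      Function.Surjective ι →
      (∀ l, h l = hcomp (ι l) ∧ H l = Hcomp (ι l)) →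
      (⨆ i, hcomp i) ≤ dimH FX ∧ dimH FX ≤ ⨆ i, Hcomp i :=
  dimH_of_finite_union_decomposition_general p FX FY hdecomp h H hbounds
end
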